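/- Let T be ergodic measure-preserving on (X,A,μ) and (A_l) asymptotically rare events. Then μ(μ(A_l)φ_{A_l} ≤ t) ⇒ 1 − e^{−θt} as l → ∞ (for θ ∈ (0,1]) implies that for every sequence of positive integers (k_l) with μ(A_l)k_l → t > 0, one has μ(φ_{A_l} = k_l) ∼ θ e^{−θt} μ(A_l). -/

import Mathlib

/-!
Since `{φ_A = n + 1} ⊆ T⁻¹ {φ_A = n}` and `T` preserves `μ`, the point masses `μ(φ_A = n)` are
nonincreasing in `n ≥ 1`. Now let `F_l(n) = f_l(1) + ⋯ + f_l(n)` with `f_l ≥ 0` nonincreasing on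
`n ≥ 1`, and suppose `F_l(⌊s / a_l⌋) → G(s)` with `G` differentiable at `t`. If `a_l k_l → t`, then
`f_l(k_l)` is squeezed between the average increments of `F_l` over the rescaled windows
`(t - δ, t + δ²]` and `(t + δ², t + δ]`, which tend to difference quotients of `G` over windows of
length `≈ δ`; hence `f_l(k_l) / a_l → G'(t)`. The point `t + δ²` eventually lies above `a_l k_l`
and is only `o(δ)` away from `t`. Here `a_l = μ(A_l)`, `f_l(n) = μ(φ_{A_l} = n)` and
`G(s) = 1 - e^{-θ s}`.
-/

open MeasureTheory Filter Topology
open scoped ENNReal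

/-- The paper's `φ_A`; it is `⊤` when the orbit of `x` never enters `A`. -/
noncomputable def hitTime {X : Type*} (T : X → X) (A : Set X) (x : X) : ℕ∞ :=
  sInf ((↑) '' {n : ℕ | 1 ≤ n ∧ T^[n] x ∈ A})

section hitTime

variable {X : Type*} {T : X → X} {A : Set X} {x : X} {n : ℕ}

lemma hitTime_lt_coe_iff : hitTime T A x < n ↔ ∃ j, (1 ≤ j ∧ j < n) ∧ T^[j] x ∈ A := by
  simp [hitTime, sInf_lt_iff, and_right_comm]

lemma hitTime_le_coe_iff : hitTime T A x ≤ n ↔ ∃ j, (1 ≤ j ∧ j ≤ n) ∧ T^[j] x ∈ A := by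
  rw [← ENat.lt_add_one_iff (ENat.natCast_ne_top n), ← Nat.cast_succ, hitTime_lt_coe_iff]
  simp only [Nat.lt_succ_iff]

lemma one_le_hitTime : 1 ≤ hitTime T A x :=
  le_sInf <| by rintro _ ⟨j, ⟨hj, -⟩, rfl⟩; exact_mod_cast hj

lemma hitTime_eq_coe_iff (hn : 1 ≤ n) :
    hitTime T A x = n ↔ T^[n] x ∈ A ∧ ∀ j, 1 ≤ j → j < n → T^[j] x ∉ A := by
  rw [le_antisymm_iff, hitTime_le_coe_iff, ← not_lt, hitTime_lt_coe_iff]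
  constructor
  · rintro ⟨⟨j, ⟨hj1, hjn⟩, hjA⟩, hmin⟩
    obtain rfl : j = n := by
      by_contra hne
      exact hmin ⟨j, ⟨hj1, lt_of_le_of_ne hjn hne⟩, hjA⟩
    exact ⟨hjA, fun i hi1 hij hiA => hmin ⟨i, ⟨hi1, hij⟩, hiA⟩⟩
  · rintro ⟨hnA, hmin⟩
    exact ⟨⟨n, ⟨hn, le_rfl⟩, hnA⟩, fun ⟨j, ⟨hj1, hjn⟩, hjA⟩ => hmin j hj1 hjn hjA⟩

lemma hitTime_apply_eq_of_eq_add_one (hn : 1 ≤ n) (h : hitTime T A x = (n + 1 : ℕ)) :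
    hitTime T A (T x) = n := by
  rw [hitTime_eq_coe_iff (by omega)] at h
  rw [hitTime_eq_coe_iff hn, ← Function.iterate_succ_apply]
  exact ⟨h.1, fun j hj1 hjn => by
    rw [← Function.iterate_succ_apply]; exact h.2 (j + 1) (by omega) (by omega)⟩

lemma setOf_hitTime_lt_coe (n : ℕ) :
    {x | hitTime T A x < n} = ⋃ j ∈ Finset.Ico 1 n, T^[j] ⁻¹' A := by
  ext x
  simp [hitTime_lt_coe_iff]

lemma setOf_hitTime_le_coe (n : ℕ) :
    {x | hitTime T A x ≤ n} = ⋃ j ∈ Finset.Ioc 0 n, {x | hitTime T A x = j} := by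
  ext x
  simp only [Set.mem_ofPred_eq, Set.mem_iUnion, Finset.mem_Ioc, exists_prop]
  constructor
  · intro hx
    have h1 : 1 ≤ hitTime T A x := one_le_hitTime
    lift hitTime T A x to ℕ using ne_top_of_le_ne_top (ENat.natCast_ne_top n) hx with m
    exact ⟨m, ⟨by exact_mod_cast h1, by exact_mod_cast hx⟩, rfl⟩
  · rintro ⟨j, ⟨-, hjn⟩, hj⟩
    exact hj ▸ Nat.cast_le.mpr hjn

variable [MeasurableSpace X]

lemma measurableSet_hitTime_lt_coe (hT : Measurable T) (hA : MeasurableSet A) (n : ℕ) :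
    MeasurableSet {x | hitTime T A x < n} := by
  rw [setOf_hitTime_lt_coe]
  exact Finset.measurableSet_biUnion _ fun j _ => hT.iterate j hA

lemma measurableSet_hitTime_eq_coe (hT : Measurable T) (hA : MeasurableSet A) (n : ℕ) :
    MeasurableSet {x | hitTime T A x = n} := by
  have hdiff : {x | hitTime T A x = n} =
      {x | hitTime T A x < (n + 1 : ℕ)} \ {x | hitTime T A x < n} := by
    ext x
    simp only [Set.mem_ofPred_eq, Set.mem_sdiff, not_lt, Nat.cast_succ,
      ENat.lt_add_one_iff (ENat.natCast_ne_top n), le_antisymm_iff]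
  rw [hdiff]
  exact (measurableSet_hitTime_lt_coe hT hA _).diff (measurableSet_hitTime_lt_coe hT hA _)

variable {μ : Measure X} [IsFiniteMeasure μ]

lemma measureReal_hitTime_le_coe (hT : Measurable T) (hA : MeasurableSet A) (n : ℕ) :
    μ.real {x | hitTime T A x ≤ n} = ∑ j ∈ Finset.Ioc 0 n, μ.real {x | hitTime T A x = j} := by
  rw [setOf_hitTime_le_coe]
  refine measureReal_biUnion_finset (fun i _ j _ hij => ?_)
    fun j _ => measurableSet_hitTime_eq_coe hT hA j
  exact Set.disjoint_left.mpr fun x hi hj => hij (by exact_mod_cast hi.symm.trans hj)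

lemma antitoneOn_measureReal_hitTime_eq (hT : MeasurePreserving T μ μ) (hA : MeasurableSet A) :
    AntitoneOn (fun n : ℕ => μ.real {x | hitTime T A x = n}) (Set.Ici 1) := by
  refine antitoneOn_nat_Ici_of_succ_le fun n hn => ?_
  calc μ.real {x | hitTime T A x = (n + 1 : ℕ)}
      ≤ μ.real (T ⁻¹' {x | hitTime T A x = n}) :=
        measureReal_mono fun x hx => hitTime_apply_eq_of_eq_add_one hn hx
    _ = μ.real {x | hitTime T A x = n} :=
        hT.measureReal_preimage (measurableSet_hitTime_eq_coe hT.measurable hA n).nullMeasurableSet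

end hitTime

lemma mul_toENNReal_le_ofReal_iff {c : ℝ≥0∞} (hc0 : c ≠ 0) (hc : c ≠ ∞) {s : ℝ} (hs : 0 ≤ s)
    (e : ℕ∞) : c * (e : ℝ≥0∞) ≤ ENNReal.ofReal s ↔ e ≤ (⌊s / c.toReal⌋₊ : ℕ) := by
  have hc' : 0 < c.toReal := ENNReal.toReal_pos hc0 hc
  induction e using ENat.recTopCoe with
  | top => simp [ENNReal.mul_top hc0]
  | coe j =>
    rw [ENat.toENNReal_coe, Nat.cast_le, Nat.le_floor_iff (by positivity), le_div_iff₀ hc',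
      ← ENNReal.ofReal_toReal hc, ← ENNReal.ofReal_natCast j, ← ENNReal.ofReal_mul hc'.le,
      ENNReal.ofReal_le_ofReal_iff hs, ENNReal.toReal_ofReal hc'.le, mul_comm]

lemma HasDerivAt.tendsto_sub_comp_div {G p q : ℝ → ℝ} {g p' q' t : ℝ} (hG : HasDerivAt G g t)
    (hp : HasDerivAt p p' 0) (hq : HasDerivAt q q' 0) (hp0 : p 0 = t) (hq0 : q 0 = t) :
    Tendsto (fun δ => (G (p δ) - G (q δ)) / δ) (𝓝[≠] 0) (𝓝 (g * p' - g * q')) := by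
  have h := ((hp0 ▸ hG).comp 0 hp).sub ((hq0 ▸ hG).comp 0 hq)
  refine (hasDerivAt_iff_tendsto_slope.mp h).congr fun δ => ?_
  simp [slope_def_field, hp0, hq0]

section antitone

open Finset

variable {f : ℕ → ℝ}

lemma mul_le_sum_Ioc_of_antitoneOn (hf : AntitoneOn f (Set.Ici 1)) {b k : ℕ} (hbk : b ≤ k) :
    ((k : ℝ) - b) * f k ≤ ∑ j ∈ Ioc b k, f j := by
  have := card_nsmul_le_sum (Ioc b k) f (f k) fun j hj => by
    rw [mem_Ioc] at hj
    exact hf (Set.mem_Ici.mpr (by omega)) (Set.mem_Ici.mpr (by omega)) hj.2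
  rwa [Nat.card_Ioc, nsmul_eq_mul, Nat.cast_sub hbk] at this

lemma sum_Ioc_le_mul_of_antitoneOn (hf : AntitoneOn f (Set.Ici 1)) {k m : ℕ} (hk : 1 ≤ k)
    (hkm : k ≤ m) : ∑ j ∈ Ioc k m, f j ≤ ((m : ℝ) - k) * f k := by
  have := sum_le_card_nsmul (Ioc k m) f (f k) fun j hj => by
    rw [mem_Ioc] at hj
    exact hf (Set.mem_Ici.mpr hk) (Set.mem_Ici.mpr (by omega)) hj.1.le
  rwa [Nat.card_Ioc, nsmul_eq_mul, Nat.cast_sub hkm] at this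

lemma sum_Ioc_zero_sub_sum_Ioc_zero {b m : ℕ} (hbm : b ≤ m) :
    ∑ j ∈ Ioc 0 m, f j - ∑ j ∈ Ioc 0 b, f j = ∑ j ∈ Ioc b m, f j := by
  rw [← sum_Ioc_consecutive f (Nat.zero_le b) hbm, add_sub_cancel_left]

lemma sum_Ioc_zero_mono (hf0 : ∀ n, 0 ≤ f n) {m n : ℕ} (hmn : m ≤ n) :
    ∑ j ∈ Ioc 0 m, f j ≤ ∑ j ∈ Ioc 0 n, f j :=
  sum_le_sum_of_subset_of_nonneg (Ioc_subset_Ioc_right hmn) fun j _ _ => hf0 j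

variable {a u v w : ℝ} {k : ℕ}

lemma mul_floor_div_le (ha : 0 < a) (hu : 0 ≤ u) : a * ⌊u / a⌋₊ ≤ u := by
  calc a * ⌊u / a⌋₊ ≤ a * (u / a) := by gcongr; exact Nat.floor_le (by positivity)
    _ = u := mul_div_cancel₀ u ha.ne'

lemma le_floor_div_of_mul_le (ha : 0 < a) (hkv : a * k ≤ v) : k ≤ ⌊v / a⌋₊ :=
  Nat.le_floor <| (le_div_iff₀ ha).mpr (by linarith)

lemma div_le_slope_of_antitoneOn (hf0 : ∀ n, 0 ≤ f n) (hf : AntitoneOn f (Set.Ici 1))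
    (ha : 0 < a) (hu : 0 ≤ u) (huk : u < a * k) (hkv : a * k ≤ v) :
    f k / a ≤ (∑ j ∈ Ioc 0 ⌊v / a⌋₊, f j - ∑ j ∈ Ioc 0 ⌊u / a⌋₊, f j) / (a * k - u) := by
  have hK₁ := mul_floor_div_le ha hu
  have hK₁k : ⌊u / a⌋₊ ≤ k := by
    exact_mod_cast (lt_of_mul_lt_mul_left (hK₁.trans_lt huk) ha.le).le
  have hsum := mul_le_sum_Ioc_of_antitoneOn hf hK₁k
  rw [← sum_Ioc_zero_sub_sum_Ioc_zero hK₁k] at hsum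
  have hmono := sum_Ioc_zero_mono hf0 (le_floor_div_of_mul_le ha hkv)
  rw [div_le_div_iff₀ ha (by linarith)]
  nlinarith [hf0 k]

lemma slope_le_div_of_antitoneOn (hf0 : ∀ n, 0 ≤ f n) (hf : AntitoneOn f (Set.Ici 1))
    (ha : 0 < a) (hk : 1 ≤ k) (hkv : a * k ≤ v) (hkw : a * k < w) :
    (∑ j ∈ Ioc 0 ⌊w / a⌋₊, f j - ∑ j ∈ Ioc 0 ⌊v / a⌋₊, f j) / (w - a * k) ≤ f k / a := by
  have hK₃ := mul_floor_div_le ha ((by positivity : (0 : ℝ) ≤ a * k).trans hkw.le)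
  have hkK₃ := le_floor_div_of_mul_le ha hkw.le
  have hsum := sum_Ioc_le_mul_of_antitoneOn hf hk hkK₃
  rw [← sum_Ioc_zero_sub_sum_Ioc_zero hkK₃] at hsum
  have hmono := sum_Ioc_zero_mono hf0 (le_floor_div_of_mul_le ha hkv)
  rw [div_le_div_iff₀ (by linarith) ha]
  nlinarith [hf0 k]

end antitone

section localLimit

open Finset

variable {a : ℕ → ℝ} {f : ℕ → ℕ → ℝ} {k : ℕ → ℕ} {G : ℝ → ℝ} {g t b : ℝ}

lemma eventually_div_lt_of_antitoneOn (ha : ∀ l, 0 < a l) (hf0 : ∀ l n, 0 ≤ f l n)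
    (hf : ∀ l, AntitoneOn (f l) (Set.Ici 1))
    (hS : ∀ s, 0 < s → Tendsto (fun l => ∑ j ∈ Ioc 0 ⌊s / a l⌋₊, f l j) atTop (𝓝 (G s)))
    (hG : HasDerivAt G g t) (ht : 0 < t) (hkt : Tendsto (fun l => a l * k l) atTop (𝓝 t))
    (hb : g < b) : ∀ᶠ l in atTop, f l (k l) / a l < b := by
  have hslope : Tendsto (fun δ => (G (t + δ ^ 2) - G (t - δ)) / δ) (𝓝[>] 0) (𝓝 g) := by
    have := hG.tendsto_sub_comp_div (((hasDerivAt_id 0).pow 2).const_add t)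
      ((hasDerivAt_id 0).const_sub t) (by simp) (by simp)
    simpa using this.mono_left (nhdsGT_le_nhdsNE 0)
  obtain ⟨δ, hδb, hδ0, hδt⟩ :=
    ((hslope.eventually_lt_const hb).and (Ioo_mem_nhdsGT ht)).exists
  have hlim : Tendsto (fun l => (∑ j ∈ Ioc 0 ⌊(t + δ ^ 2) / a l⌋₊, f l j -
      ∑ j ∈ Ioc 0 ⌊(t - δ) / a l⌋₊, f l j) / (a l * k l - (t - δ))) atTop
      (𝓝 ((G (t + δ ^ 2) - G (t - δ)) / δ)) := by
    have := ((hS (t + δ ^ 2) (by positivity)).sub (hS (t - δ) (by linarith))).div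
      (hkt.sub_const (t - δ)) (by linarith)
    rwa [sub_sub_cancel] at this
  filter_upwards [hlim.eventually_lt_const hδb,
    hkt.eventually_const_lt (by linarith : t - δ < t),
    hkt.eventually_lt_const (lt_add_of_pos_right t (pow_pos hδ0 2))] with l hlt hu hv
  exact (div_le_slope_of_antitoneOn (hf0 l) (hf l) (ha l) (by linarith : 0 ≤ t - δ) hu
    hv.le).trans_lt hlt

lemma eventually_lt_div_of_antitoneOn (ha : ∀ l, 0 < a l) (hf0 : ∀ l n, 0 ≤ f l n)
    (hf : ∀ l, AntitoneOn (f l) (Set.Ici 1))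
    (hS : ∀ s, 0 < s → Tendsto (fun l => ∑ j ∈ Ioc 0 ⌊s / a l⌋₊, f l j) atTop (𝓝 (G s)))
    (hG : HasDerivAt G g t) (ht : 0 < t) (hkt : Tendsto (fun l => a l * k l) atTop (𝓝 t))
    (hb : b < g) : ∀ᶠ l in atTop, b < f l (k l) / a l := by
  have hslope : Tendsto (fun δ => (G (t + δ) - G (t + δ ^ 2)) / δ) (𝓝[>] 0) (𝓝 g) := by
    have := hG.tendsto_sub_comp_div ((hasDerivAt_id 0).const_add t)
      (((hasDerivAt_id 0).pow 2).const_add t) (by simp) (by simp)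
    simpa using this.mono_left (nhdsGT_le_nhdsNE 0)
  obtain ⟨δ, hδb, hδ : 0 < δ⟩ :=
    ((hslope.eventually_const_lt hb).and (self_mem_nhdsWithin : Set.Ioi (0 : ℝ) ∈ 𝓝[>] 0)).exists
  have hlim : Tendsto (fun l => (∑ j ∈ Ioc 0 ⌊(t + δ) / a l⌋₊, f l j -
      ∑ j ∈ Ioc 0 ⌊(t + δ ^ 2) / a l⌋₊, f l j) / (t + δ - a l * k l)) atTop
      (𝓝 ((G (t + δ) - G (t + δ ^ 2)) / δ)) := by
    have := ((hS (t + δ) (by positivity)).sub (hS (t + δ ^ 2) (by positivity))).div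
      ((tendsto_const_nhds (x := t + δ)).sub hkt) (by linarith)
    rwa [add_sub_cancel_left] at this
  filter_upwards [hlim.eventually_const_lt hδb, hkt.eventually_const_lt ht,
    hkt.eventually_lt_const (lt_add_of_pos_right t (pow_pos hδ 2)),
    hkt.eventually_lt_const (by linarith : t < t + δ)] with l hlt hk hv hw
  have hk1 : 1 ≤ k l := Nat.one_le_iff_ne_zero.mpr fun h => by simp [h] at hk
  exact hlt.trans_le (slope_le_div_of_antitoneOn (hf0 l) (hf l) (ha l) hk1 hv.le hw)

theorem tendsto_div_of_antitoneOn (ha : ∀ l, 0 < a l) (hf0 : ∀ l n, 0 ≤ f l n)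
    (hf : ∀ l, AntitoneOn (f l) (Set.Ici 1))
    (hS : ∀ s, 0 < s → Tendsto (fun l => ∑ j ∈ Ioc 0 ⌊s / a l⌋₊, f l j) atTop (𝓝 (G s)))
    (hG : HasDerivAt G g t) (ht : 0 < t) (hkt : Tendsto (fun l => a l * k l) atTop (𝓝 t)) :
    Tendsto (fun l => f l (k l) / a l) atTop (𝓝 g) :=
  tendsto_order.2 ⟨fun _ hb => eventually_lt_div_of_antitoneOn ha hf0 hf hS hG ht hkt hb,
    fun _ hb => eventually_div_lt_of_antitoneOn ha hf0 hf hS hG ht hkt hb⟩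

end localLimit

theorem stmt_7_general {X : Type*} [MeasurableSpace X] {μ : Measure X} [IsProbabilityMeasure μ]
    {T : X → X} (hT : Ergodic T μ) {A : ℕ → Set X} (hmeas : ∀ l, MeasurableSet (A l))
    (hpos : ∀ l, 0 < μ (A l)) {θ : ℝ}
    (hcvg : ∀ t : ℝ, 0 ≤ t →
      Tendsto (fun l =>
          (μ {x | μ (A l) * ((hitTime T (A l) x : ℕ∞) : ℝ≥0∞) ≤ ENNReal.ofReal t}).toReal)
        atTop (𝓝 (1 - Real.exp (-θ * t))))
    {k : ℕ → ℕ} {t : ℝ} (ht : 0 < t)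
    (hkt : Tendsto (fun l => (μ (A l)).toReal * (k l : ℝ)) atTop (𝓝 t)) :
    Tendsto (fun l => (μ {x | hitTime T (A l) x = (k l : ℕ∞)}).toReal / (μ (A l)).toReal)
      atTop (𝓝 (θ * Real.exp (-θ * t))) := by
  have hG : HasDerivAt (fun s => 1 - Real.exp (-θ * s)) (θ * Real.exp (-θ * t)) t :=
    ((((hasDerivAt_id' t).const_mul (-θ)).exp).const_sub 1).congr_deriv (by ring)
  refine tendsto_div_of_antitoneOn (f := fun l n => μ.real {x | hitTime T (A l) x = n})
    (fun l => ENNReal.toReal_pos (hpos l).ne' (measure_ne_top μ _)) (fun _ _ => measureReal_nonneg)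
    (fun l => antitoneOn_measureReal_hitTime_eq hT.toMeasurePreserving (hmeas l))
    (fun s hs => (hcvg s hs.le).congr fun l => ?_) hG ht hkt
  have hscaled : {x | μ (A l) * (hitTime T (A l) x : ℝ≥0∞) ≤ ENNReal.ofReal s} =
      {x | hitTime T (A l) x ≤ ⌊s / (μ (A l)).toReal⌋₊} :=
    Set.ext fun x => mul_toENNReal_le_ofReal_iff (hpos l).ne' (measure_ne_top μ _) hs.le _
  rw [hscaled]
  exact measureReal_hitTime_le_coe hT.measurable (hmeas l) _

/-- Exponential automatic LLT for hitting times: if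
`μ(μ(A l)·φ_{A l} ≤ t) ⇒ 1 − e^{−θt}` with `θ ∈ (0,1]`, then for every sequence of positive
integers `k l` with `μ(A l)·k l → t > 0` one has `μ(φ_{A l} = k l) ∼ θ e^{−θt} μ(A l)`. -/
theorem stmt_7 {X : Type*} [MeasurableSpace X] {μ : Measure X} [IsProbabilityMeasure μ]
    {T : X → X} (hT : Ergodic T μ) {A : ℕ → Set X} (hmeas : ∀ l, MeasurableSet (A l))
    (hpos : ∀ l, 0 < μ (A l)) (hrare : Tendsto (fun l => μ (A l)) atTop (𝓝 0))
    {θ : ℝ} (hθ0 : 0 < θ) (hθ1 : θ ≤ 1)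
    (hcvg : ∀ t : ℝ, 0 ≤ t →
      Tendsto (fun l =>
          (μ {x | μ (A l) * ((hitTime T (A l) x : ℕ∞) : ℝ≥0∞) ≤ ENNReal.ofReal t}).toReal)
        atTop (𝓝 (1 - Real.exp (-θ * t))))
    {k : ℕ → ℕ} (hk1 : ∀ l, 1 ≤ k l) {t : ℝ} (ht : 0 < t)
    (hkt : Tendsto (fun l => (μ (A l)).toReal * (k l : ℝ)) atTop (𝓝 t)) :
    Tendsto (fun l => (μ {x | hitTime T (A l) x = (k l : ℕ∞)}).toReal / (μ (A l)).toReal)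
      atTop (𝓝 (θ * Real.exp (-θ * t))) :=
  stmt_7_general hT hmeas hpos hcvg ht hkt
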